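/- arXiv:2001.05382 — 3 statements merged into one kernel-verified Lean document; each statement's English description precedes it below -/
import Mathlib

section
/- For real $X > 0$, let $N^*(X)$ denote the number of ordered finite tuples $(d_1,\ldots,d_j)$ of positive integers (with $j \geq 1$ varying) satisfying $\prod_{k=1}^j (3 d_k) \leq X$. Then $N^*(X) = 0$ for $X < 3$, and for all $X > 0$ one has $N^*(X) \leq (X/3)^{5/3}$. -/
/-!
Encode a tuple as a nonempty list and let `N X` count those of weight `∏ 3 dₖ ≤ X`. Splitting off
the first entry `d ≤ X / 3` gives `N X ≤ ∑_{d ≤ X/3} (1 + N (X / 3d))`, and we induct on the size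
of `X`. For `X < 9` the inner counts vanish, so `N X ≤ X / 3`. Otherwise the inductive bound and
`∑ d^(-5/3) ≤ 1 + ∫₁^∞ x^(-5/3) dx = 5/2` give `N X ≤ X/3 + (5/2) (X/9)^(5/3)`, which is at most
`(X/3)^(5/3)` because `3^(5/3) ≥ 11/2`.
-/

theorem induction_of_le_div {b : ℝ} (hb : 1 < b) {P : ℝ → Prop} (base : ∀ X < b, P X)
    (step : ∀ X, b ≤ X → (∀ Y ≤ X / b, P Y) → P X) (X : ℝ) : P X := by
  obtain ⟨n, hn⟩ := pow_unbounded_of_one_lt X hb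
  induction n generalizing X with
  | zero => exact base X (by linarith [pow_zero b])
  | succ n ih =>
    rcases lt_or_ge X b with hXb | hXb
    · exact base X hXb
    refine step X hXb fun Y hY => ih Y (hY.trans_lt ?_)
    rwa [div_lt_iff₀ (by linarith), ← pow_succ]

theorem sum_Icc_rpow_neg_le {p : ℝ} (hp : 1 < p) (D : ℕ) :
    ∑ d ∈ Finset.Icc 1 D, (d : ℝ) ^ (-p) ≤ p / (p - 1) := by
  have hp1 : 0 < p - 1 := by linarith
  cases D with
  | zero => simp; positivity
  | succ n =>
    have hanti : AntitoneOn (fun x : ℝ => x ^ (-p)) (Set.Icc 1 (1 + n)) := fun x hx y _ hxy =>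
      Real.rpow_le_rpow_of_nonpos (by linarith [hx.1]) hxy (by linarith)
    have htail : ∑ i ∈ Finset.range n, ((1 : ℝ) + ↑(i + 1)) ^ (-p) ≤ 1 / (p - 1) := calc
      _ ≤ ∫ x in (1 : ℝ)..1 + n, x ^ (-p) := hanti.sum_le_integral
      _ = (1 - (1 + n : ℝ) ^ (1 - p)) / (p - 1) := by
        rw [integral_rpow (Or.inr ⟨by linarith, by simp⟩), Real.one_rpow, ← neg_div_neg_eq]
        ring_nf
      _ ≤ 1 / (p - 1) := by
        gcongr; linarith [Real.rpow_nonneg (by positivity : (0 : ℝ) ≤ 1 + n) (1 - p)]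
    rw [← Finset.Ico_add_one_right_eq_Icc, Finset.sum_Ico_eq_sum_range, Nat.add_sub_cancel,
      Finset.sum_range_succ']
    push_cast at htail ⊢
    rw [Real.one_rpow, show p / (p - 1) = 1 / (p - 1) + 1 by field_simp; ring]
    linarith

theorem eleven_halves_le_three_rpow : (11 / 2 : ℝ) ≤ 3 ^ ((5 : ℝ) / 3) := by
  refine le_of_pow_le_pow_left₀ three_ne_zero (by positivity) ?_
  rw [← Real.rpow_natCast ((3 : ℝ) ^ ((5 : ℝ) / 3)), ← Real.rpow_mul (by norm_num)]
  norm_num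

theorem three_mul_add_le_rpow {u : ℝ} (hu : 1 ≤ u) :
    3 * u + 5 / 2 * u ^ ((5 : ℝ) / 3) ≤ (3 * u) ^ ((5 : ℝ) / 3) := by
  have hu53 : u ≤ u ^ ((5 : ℝ) / 3) := Real.self_le_rpow_of_one_le hu (by norm_num)
  rw [Real.mul_rpow (by norm_num) (by linarith)]
  nlinarith [eleven_halves_le_three_rpow]

noncomputable def weight (l : List ℕ+) : ℝ := (l.map fun d : ℕ+ => 3 * ((d : ℕ) : ℝ)).prod

def boundedLists (X : ℝ) : Set (List ℕ+) := {l | l ≠ [] ∧ weight l ≤ X}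

@[simp]
theorem weight_cons (d : ℕ+) (l : List ℕ+) : weight (d :: l) = 3 * (d : ℕ) * weight l := by
  simp [weight]

theorem weight_ofFn {n : ℕ} (g : Fin n → ℕ+) :
    weight (List.ofFn g) = ∏ k, 3 * ((g k : ℕ) : ℝ) := by
  rw [weight, List.map_ofFn, List.prod_ofFn]
  rfl

theorem one_le_weight (l : List ℕ+) : 1 ≤ weight l := by
  induction l with
  | nil => simp [weight]
  | cons d l ih =>
    have hd : (1 : ℝ) ≤ (d : ℕ) := Nat.one_le_cast.2 d.pos
    rw [weight_cons]
    nlinarith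

theorem three_mul_le_weight_cons (d : ℕ+) (l : List ℕ+) :
    3 * ((d : ℕ) : ℝ) ≤ weight (d :: l) := by
  rw [weight_cons]
  exact le_mul_of_one_le_right (by positivity) (one_le_weight l)

theorem boundedLists_eq_empty {X : ℝ} (hX : X < 3) : boundedLists X = ∅ := by
  refine Set.eq_empty_of_forall_notMem fun l ⟨hl, hlX⟩ => ?_
  obtain ⟨d, l, rfl⟩ := List.exists_cons_of_ne_nil hl
  have hd : (1 : ℝ) ≤ (d : ℕ) := Nat.one_le_cast.2 d.pos
  linarith [three_mul_le_weight_cons d l]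

theorem boundedLists_subset_biUnion (X : ℝ) :
    boundedLists X ⊆ ⋃ d ∈ Finset.Icc 1 ⌊X / 3⌋₊,
      List.cons d.toPNat' '' insert [] (boundedLists (X / (3 * d))) := by
  rintro l ⟨hl, hlX⟩
  obtain ⟨d, l, rfl⟩ := List.exists_cons_of_ne_nil hl
  have hdX : 3 * ((d : ℕ) : ℝ) ≤ X := (three_mul_le_weight_cons d l).trans hlX
  refine Set.mem_biUnion (x := (d : ℕ)) ?_ ⟨l, ?_, by simp⟩
  · exact Finset.mem_Icc.2 ⟨d.pos, Nat.le_floor (by rw [le_div_iff₀' three_pos]; exact hdX)⟩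
  rcases eq_or_ne l [] with rfl | hl'
  · exact Set.mem_insert _ _
  refine Set.mem_insert_of_mem _ ⟨hl', ?_⟩
  rw [le_div_iff₀' (by positivity)]
  simpa using hlX

theorem boundedLists_finite (X : ℝ) : (boundedLists X).Finite := by
  induction X using induction_of_le_div (b := 3) (by norm_num) with
  | base X hX => simp [boundedLists_eq_empty hX]
  | step X hX ih =>
    refine ((Finset.Icc 1 ⌊X / 3⌋₊).finite_toSet.biUnion fun d hd => ?_).subset
      (boundedLists_subset_biUnion X)
    have hd : (1 : ℝ) ≤ d := Nat.one_le_cast.2 (Finset.mem_Icc.1 hd).1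
    have hY : X / (3 * d) ≤ X / 3 := div_le_div_of_nonneg_left (by linarith) three_pos (by linarith)
    exact ((ih _ hY).insert []).image _

theorem ncard_boundedLists_le_sum (X : ℝ) :
    (boundedLists X).ncard ≤
      ∑ d ∈ Finset.Icc 1 ⌊X / 3⌋₊, ((boundedLists (X / (3 * d))).ncard + 1) := calc
  _ ≤ (⋃ d ∈ Finset.Icc 1 ⌊X / 3⌋₊,
        List.cons d.toPNat' '' insert [] (boundedLists (X / (3 * d)))).ncard :=
      Set.ncard_le_ncard (boundedLists_subset_biUnion X) ((Finset.finite_toSet _).biUnion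
        fun d _ => ((boundedLists_finite _).insert []).image _)
  _ ≤ _ := Finset.set_ncard_biUnion_le _ _
  _ ≤ _ := by
    gcongr with d
    rw [Set.ncard_image_of_injective _ (List.cons_injective)]
    exact Set.ncard_insert_le _ _

theorem ncard_boundedLists_le_of_lt_nine {X : ℝ} (hX : X < 9) :
    (boundedLists X).ncard ≤ ⌊X / 3⌋₊ := calc
  _ ≤ _ := ncard_boundedLists_le_sum X
  _ = ∑ _d ∈ Finset.Icc 1 ⌊X / 3⌋₊, 1 := Finset.sum_congr rfl fun d hd => by
      have hd : (1 : ℝ) ≤ d := Nat.one_le_cast.2 (Finset.mem_Icc.1 hd).1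
      rw [boundedLists_eq_empty ((div_lt_iff₀ (by positivity)).2 (by nlinarith)), Set.ncard_empty]
  _ = ⌊X / 3⌋₊ := by simp

theorem ncard_boundedLists_le {X : ℝ} (hX : 0 < X) :
    ((boundedLists X).ncard : ℝ) ≤ (X / 3) ^ ((5 : ℝ) / 3) := by
  induction X using induction_of_le_div (b := 3) (by norm_num) with
  | base X h3 => simp [boundedLists_eq_empty h3]; positivity
  | step X h3 ih =>
    set D := ⌊X / 3⌋₊
    have hcount : ((boundedLists X).ncard : ℝ) ≤
        ∑ d ∈ Finset.Icc 1 D, (((boundedLists (X / (3 * d))).ncard : ℝ) + 1) := by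
      exact_mod_cast ncard_boundedLists_le_sum X
    have hD : (D : ℝ) ≤ X / 3 := Nat.floor_le (by positivity)
    rcases lt_or_ge X 9 with h9 | h9
    · calc ((boundedLists X).ncard : ℝ) ≤ D :=
            Nat.cast_le.2 (ncard_boundedLists_le_of_lt_nine h9)
        _ ≤ X / 3 := hD
        _ ≤ (X / 3) ^ ((5 : ℝ) / 3) := Real.self_le_rpow_of_one_le (by linarith) (by norm_num)
    · have hterm : ∀ d ∈ Finset.Icc 1 D, ((boundedLists (X / (3 * d))).ncard : ℝ) ≤
          (X / 9) ^ ((5 : ℝ) / 3) * (d : ℝ) ^ (-((5 : ℝ) / 3)) := by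
        intro d hd
        have hd : (1 : ℝ) ≤ d := Nat.one_le_cast.2 (Finset.mem_Icc.1 hd).1
        have hY : X / (3 * d) ≤ X / 3 :=
          div_le_div_of_nonneg_left (by linarith) three_pos (by linarith)
        refine (ih _ hY (by positivity)).trans_eq ?_
        rw [show X / (3 * d) / 3 = X / 9 / d by field_simp; ring,
          Real.div_rpow (by positivity) (by positivity), div_eq_mul_inv,
          ← Real.rpow_neg (by positivity)]
      calc ((boundedLists X).ncard : ℝ)
          ≤ ∑ d ∈ Finset.Icc 1 D, ((X / 9) ^ ((5 : ℝ) / 3) * (d : ℝ) ^ (-((5 : ℝ) / 3)) + 1) :=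
            hcount.trans (Finset.sum_le_sum fun d hd => by linarith [hterm d hd])
        _ = (X / 9) ^ ((5 : ℝ) / 3) * ∑ d ∈ Finset.Icc 1 D, (d : ℝ) ^ (-((5 : ℝ) / 3)) + D := by
            simp [Finset.sum_add_distrib, Finset.mul_sum]
        _ ≤ (X / 9) ^ ((5 : ℝ) / 3) * (5 / 2) + X / 3 := by
            gcongr
            exact (sum_Icc_rpow_neg_le (by norm_num) D).trans_eq (by norm_num)
        _ = 3 * (X / 9) + 5 / 2 * (X / 9) ^ ((5 : ℝ) / 3) := by ring
        _ ≤ (3 * (X / 9)) ^ ((5 : ℝ) / 3) := three_mul_add_le_rpow (by linarith)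
        _ = (X / 3) ^ ((5 : ℝ) / 3) := by ring_nf

theorem card_tuples_le_ncard_boundedLists (X : ℝ) :
    Nat.card {p : Σ j : ℕ, Fin (j + 1) → ℕ+ // (∏ k, (3 * (p.2 k : ℕ) : ℝ)) ≤ X} ≤
      (boundedLists X).ncard := by
  have := (boundedLists_finite X).to_subtype
  rw [← Nat.card_coe_set_eq]
  refine Nat.card_le_card_of_injective
    (fun p => ⟨List.ofFn p.1.2, by simp, (weight_ofFn _).trans_le p.2⟩) ?_
  rintro ⟨⟨j, g⟩, _⟩ ⟨⟨j', g'⟩, _⟩ h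
  obtain ⟨hj, hg⟩ := Sigma.mk.inj_iff.1 (List.ofFn_inj'.1 (congrArg Subtype.val h))
  obtain rfl : j = j' := Nat.succ_injective hj
  cases hg
  rfl

theorem stmt_1 (X : ℝ) (hX : 0 < X) :
    (X < 3 →
      Nat.card {p : Σ j : ℕ, Fin (j + 1) → ℕ+ //
        (∏ k, (3 * (p.2 k : ℕ) : ℝ)) ≤ X} = 0) ∧
    (Nat.card {p : Σ j : ℕ, Fin (j + 1) → ℕ+ //
        (∏ k, (3 * (p.2 k : ℕ) : ℝ)) ≤ X} : ℝ) ≤ (X / 3) ^ ((5 : ℝ) / 3) := by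
  refine ⟨fun h3 => ?_, (Nat.cast_le.2 (card_tuples_le_ncard_boundedLists X)).trans
    (ncard_boundedLists_le hX)⟩
  simpa [boundedLists_eq_empty h3] using card_tuples_le_ncard_boundedLists X
end

section
/- Let $F_2$ be the free group on $a_1, a_2$ and fix an integer $j \geq 2$. Consider the $2^{2j}$ elements of $F_2$ of the form $w = a_1^{2\epsilon_1} a_2^{2\epsilon_2} \cdots a_1^{2\epsilon_{2j-1}} a_2^{2\epsilon_{2j}}$ with $\epsilon_i \in \{1,-1\}$. Every conjugacy class of $F_2$ contains at most $2j$ such elements; consequently the number of distinct conjugacy classes represented by these elements is at least $2^{2j}/(2j)$. -/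
/-- The element `a₁^(2ε₁) a₂^(2ε₂) ⋯ a₁^(2ε_{2j-1}) a₂^(2ε_{2j})` of the free
group on two generators, where `ε i = true` stands for exponent `+2` and
`ε i = false` for exponent `-2`. -/
def altWord (j : ℕ) (ε : Fin (2 * j) → Bool) : FreeGroup (Fin 2) :=
  ((List.finRange (2 * j)).map fun i : Fin (2 * j) =>
    FreeGroup.of (if (i : ℕ) % 2 = 0 then (0 : Fin 2) else 1) ^
      (if ε i then (2 : ℤ) else -2)).prod

/-!
Two cyclically reduced words that are conjugate in a free group are cyclic rotations of each
other: conjugating by a reduced word one letter at a time, each letter either cancels against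
an end of the word, which rotates it, or nothing cancels and the conjugate becomes strictly
longer. Spelled out letter by letter, `a₁^{±2} a₂^{±2} ⋯ a₂^{±2}` is a cyclically reduced word
of length `4j` whose generator pattern `a₁a₁a₂a₂⋯` is preserved only by rotations through an
even number of letters, and such a rotation is determined by half its amount, a number below
`2j`. Counting fibres of `ε ↦ [altWord j ε]` then gives the lower bound.
-/

open List

namespace List

variable {α : Type*}

@[simp]
theorem length_flatMap_pair (L : List α) :
    (L.flatMap fun x => [x, x]).length = 2 * L.length := by
  induction L with
  | nil => rfl
  | cons a L ih => simp [ih]; ring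

theorem getElem_flatMap_pair (L : List α) (p : ℕ)
    (hp : p < (L.flatMap fun x => [x, x]).length) :
    (L.flatMap fun x => [x, x])[p] = L[p / 2]'(by simp at hp; omega) := by
  induction L generalizing p with
  | nil => simp at hp
  | cons a L ih =>
    match p with
    | 0 | 1 => rfl
    | q + 2 =>
      simp only [flatMap_cons, cons_append, nil_append, getElem_cons_succ, ih q,
        show (q + 2) / 2 = q / 2 + 1 by omega]

end List

theorem card_le_mul_ncard_range {α β : Type*} [Finite α] (f : α → β) {m : ℕ}
    (h : ∀ a, Nat.card {a' // f a' = f a} ≤ m) : Nat.card α ≤ m * (Set.range f).ncard := by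
  classical
  have := Fintype.ofFinite α
  have hrange : Set.range f = ↑(Finset.univ.image f) := by simp
  rw [hrange, Set.ncard_coe_finset, Nat.card_eq_fintype_card, ← Finset.card_univ]
  refine Finset.card_le_mul_card_image _ _ fun b hb => ?_
  obtain ⟨a, -, rfl⟩ := Finset.mem_image.1 hb
  simpa [Nat.card_eq_fintype_card, Fintype.card_subtype] using h a

namespace FreeGroup

variable {α : Type*} {u v w : List (α × Bool)}

theorem isCyclicallyReduced_iff_isReduced_append_self :
    IsCyclicallyReduced v ↔ IsReduced (v ++ v) := by
  rw [isCyclicallyReduced_iff, IsReduced, IsReduced, isChain_append, and_self_left]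

theorem IsCyclicallyReduced.rotate (h : IsCyclicallyReduced v) (n : ℕ) :
    IsCyclicallyReduced (v.rotate n) := by
  have h3 : IsReduced (v ++ v ++ v) := by
    simpa using (h.flatten_replicate 3).isReduced
  rw [isCyclicallyReduced_iff_isReduced_append_self, rotate_eq_drop_append_take_mod]
  set m := n % v.length
  refine h3.infix ⟨take m v, drop m v, ?_⟩
  conv_rhs => rw [← take_append_drop m v]
  simp only [append_assoc]

theorem IsReduced.invRev [DecidableEq α] (h : IsReduced v) : IsReduced (invRev v) := by
  rw [isReduced_iff_reduce_eq, reduce_invRev, h.reduce_eq]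

theorem toWord_mk_conj_of_isReduced [DecidableEq α] (h₁ : IsReduced (u ++ v))
    (h₂ : IsReduced (v ++ invRev u)) (hv : v ≠ []) :
    (mk u * mk v * (mk u)⁻¹).toWord = u ++ v ++ invRev u := by
  rw [inv_mk, mul_mk, mul_mk, toWord_mk, (h₁.append_overlap h₂ hv).reduce_eq]

theorem fst_eq_imp_snd_eq_iff {a b : α × Bool} :
    (a.1 = b.1 → a.2 = b.2) ↔ b ≠ (a.1, !a.2) := by
  obtain ⟨a1, a2⟩ := a; obtain ⟨b1, b2⟩ := b
  cases a2 <;> cases b2 <;> simp [eq_comm]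

theorem mk_singleton_not_snd (x : α × Bool) : mk [(x.1, !x.2)] = (mk [x])⁻¹ := by
  simp [inv_mk, invRev]

theorem mk_conj_not_cons_eq_rotate_one (x : α × Bool) (t : List (α × Bool)) :
    mk [x] * mk ((x.1, !x.2) :: t) * (mk [x])⁻¹ = mk (((x.1, !x.2) :: t).rotate 1) := by
  have hcons : mk ((x.1, !x.2) :: t) = (mk [x])⁻¹ * mk t := by
    rw [← mk_singleton_not_snd, mul_mk]; rfl
  rw [rotate_cons_succ, rotate_zero, hcons, ← mul_mk, mk_singleton_not_snd]
  group

theorem mk_conj_append_singleton_eq_rotate (x : α × Bool) (t : List (α × Bool)) :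
    mk [x] * mk (t ++ [x]) * (mk [x])⁻¹ = mk ((t ++ [x]).rotate t.length) := by
  rw [rotate_append_length_eq, ← mul_mk, ← mul_mk]
  group

theorem IsCyclicallyReduced.exists_rotate_of_length_toWord_conj_le [DecidableEq α]
    (hv : IsCyclicallyReduced v) (hu : IsReduced u)
    (hlen : (mk u * mk v * (mk u)⁻¹).toWord.length ≤ v.length) :
    ∃ n, mk u * mk v * (mk u)⁻¹ = mk (v.rotate n) := by
  induction u using List.reverseRecOn generalizing v with
  | nil => exact ⟨0, by simp [← one_eq_mk]⟩
  | append_singleton t x ih =>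
    rcases eq_or_ne v [] with rfl | hv0
    · exact ⟨0, by simp only [← one_eq_mk, mul_one, mul_inv_cancel, rotate_nil]⟩
    have hsplit : mk (t ++ [x]) = mk t * mk [x] := rfl
    have rotate_of_conj : ∀ m, mk [x] * mk v * (mk [x])⁻¹ = mk (v.rotate m) →
        ∃ n, mk (t ++ [x]) * mk v * (mk (t ++ [x]))⁻¹ = mk (v.rotate n) := by
      intro m hm
      have hconj : mk (t ++ [x]) * mk v * (mk (t ++ [x]))⁻¹ =
          mk t * mk (v.rotate m) * (mk t)⁻¹ := by
        rw [hsplit, ← hm]; group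
      obtain ⟨n, hn⟩ := ih (hv.rotate m) (hu.infix (prefix_append t [x]).isInfix)
        (by rwa [← hconj, length_rotate])
      exact ⟨m + n, by rw [hconj, hn, rotate_rotate]⟩
    by_cases hhead : v.head? = some (x.1, !x.2)
    · obtain ⟨tl, rfl⟩ := head?_eq_some_iff.1 hhead
      exact rotate_of_conj 1 (mk_conj_not_cons_eq_rotate_one x tl)
    by_cases hlast : v.getLast? = some x
    · obtain ⟨d, rfl⟩ := getLast?_eq_some_iff.1 hlast
      exact rotate_of_conj _ (mk_conj_append_singleton_eq_rotate x d)
    exfalso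
    have h₁ : IsReduced (t ++ [x] ++ v) := by
      refine isChain_append.2 ⟨hu, hv.isReduced, ?_⟩
      simp only [getLast?_append, getLast?_singleton, Option.some_or, Option.mem_def,
        Option.some.injEq, forall_eq', fst_eq_imp_snd_eq_iff]
      rintro b hb rfl
      exact hhead hb
    have h₂ : IsReduced (v ++ invRev (t ++ [x])) := by
      refine isChain_append.2 ⟨hv.isReduced, hu.invRev, ?_⟩
      have hinv : (invRev (t ++ [x])).head? = some (x.1, !x.2) := by simp [invRev]
      simp only [hinv, Option.mem_def, Option.some.injEq, forall_eq', fst_eq_imp_snd_eq_iff]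
      rintro a ha h
      obtain ⟨h1, h2⟩ := Prod.mk.inj h
      exact hlast (ha.trans (congrArg some (Prod.ext h1.symm (Bool.not_inj h2).symm)))
    rw [toWord_mk_conj_of_isReduced h₁ h₂ hv0] at hlen
    simp only [length_append, invRev_length, length_singleton] at hlen
    omega

theorem IsCyclicallyReduced.isRotated_of_isConj [DecidableEq α] (hv : IsCyclicallyReduced v)
    (hw : IsCyclicallyReduced w) (h : IsConj (mk v) (mk w)) : v ~r w := by
  wlog hlen : w.length ≤ v.length generalizing v w
  · exact (this hw hv h.symm (by omega)).symm
  obtain ⟨g, hg⟩ := isConj_iff.1 h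
  rw [← mk_toWord (x := g)] at hg
  obtain ⟨n, hn⟩ := hv.exists_rotate_of_length_toWord_conj_le isReduced_toWord
    (by rwa [hg, toWord_mk, hw.isReduced.reduce_eq])
  have hwords := congrArg toWord (hg.symm.trans hn)
  rw [toWord_mk, toWord_mk, hw.isReduced.reduce_eq, (hv.rotate n).isReduced.reduce_eq] at hwords
  exact ⟨n, hwords.symm⟩

theorem mk_flatMap_pair (L : List (α × Bool)) :
    mk (L.flatMap fun x => [x, x]) =
      (L.map fun x => of x.1 ^ (if x.2 then (2 : ℤ) else -2)).prod := by
  induction L with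
  | nil => rfl
  | cons x L ih =>
    rw [flatMap_cons, ← mul_mk, ih, map_cons, prod_cons]
    congr 1
    obtain ⟨a, _ | _⟩ := x
    · simp [zpow_neg, sq, of, mul_mk, inv_mk, invRev]
    · simp [sq, of, mul_mk]

end FreeGroup

open FreeGroup

def altLetter (j : ℕ) (ε : Fin (2 * j) → Bool) (i : Fin (2 * j)) : Fin 2 × Bool :=
  (if (i : ℕ) % 2 = 0 then 0 else 1, ε i)

def altList (j : ℕ) (ε : Fin (2 * j) → Bool) : List (Fin 2 × Bool) :=
  (ofFn (altLetter j ε)).flatMap fun x => [x, x]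

section altList

variable {j : ℕ} {ε ε' : Fin (2 * j) → Bool}

theorem altWord_eq_mk_altList : altWord j ε = mk (altList j ε) := by
  rw [altList, mk_flatMap_pair, ofFn_eq_map, map_map]
  rfl

@[simp]
theorem length_altList : (altList j ε).length = 4 * j := by
  rw [altList, length_flatMap_pair, length_ofFn]; ring

theorem getElem_altList (p : ℕ) (hp : p < (altList j ε).length) :
    (altList j ε)[p] = altLetter j ε ⟨p / 2, by simp at hp; omega⟩ := by
  simp [altList, getElem_flatMap_pair]

theorem fst_altLetter_eq_iff {i k : Fin (2 * j)} :
    (altLetter j ε i).1 = (altLetter j ε' k).1 ↔ (i : ℕ) % 2 = k % 2 := by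
  simp only [altLetter]
  split_ifs <;> simp <;> omega

theorem isCyclicallyReduced_altList (hj : 0 < j) (ε : Fin (2 * j) → Bool) :
    IsCyclicallyReduced (altList j ε) := by
  refine ⟨isChain_iff_getElem.2 fun p hp => ?_, ?_⟩
  · rw [getElem_altList, getElem_altList, fst_altLetter_eq_iff]
    intro hpar
    have : p / 2 = (p + 1) / 2 := by simp at hpar; omega
    simp [altLetter, this]
  · rw [getLast?_eq_getElem?, head?_eq_getElem?, getElem?_eq_getElem (by simp; omega),
      getElem?_eq_getElem (by simp; omega)]
    simp only [Option.mem_def, Option.some.injEq, forall_eq', getElem_altList,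
      fst_altLetter_eq_iff, length_altList]
    omega

theorem altList_injective (j : ℕ) : Function.Injective (altList j) := by
  intro ε ε' h
  funext i
  have hi : 2 * (i : ℕ) < (altList j ε).length := by simp; omega
  have := getElem_of_eq h hi
  rw [getElem_altList, getElem_altList] at this
  simpa [altLetter] using congrArg Prod.snd this

theorem mod_two_eq_zero_of_altList_eq_rotate {k : ℕ} (hk : k < 4 * j)
    (h : altList j ε = (altList j ε').rotate k) : k % 2 = 0 := by
  have h0 := getElem_of_eq h (i := 0) (by simp; omega)
  have h1 := getElem_of_eq h (i := 1) (by simp; omega)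
  simp only [getElem_rotate, getElem_altList, length_altList] at h0 h1
  have e0 := fst_altLetter_eq_iff.1 (congrArg Prod.fst h0)
  have e1 := fst_altLetter_eq_iff.1 (congrArg Prod.fst h1)
  simp only at e0 e1
  rw [Nat.mod_eq_of_lt (by omega : 0 + k < 4 * j)] at e0
  rcases (show k + 1 < 4 * j ∨ k + 1 = 4 * j by omega) with hk1 | hk1
  · rw [Nat.mod_eq_of_lt (by omega : 1 + k < 4 * j)] at e1
    omega
  · omega

theorem exists_altList_eq_rotate_of_isConj (hj : 0 < j)
    (h : IsConj (altWord j ε') (altWord j ε)) :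
    ∃ m : Fin (2 * j), altList j ε' = (altList j ε).rotate (2 * m) := by
  rw [altWord_eq_mk_altList, altWord_eq_mk_altList] at h
  obtain ⟨n, hn⟩ := ((isCyclicallyReduced_altList hj ε').isRotated_of_isConj
    (isCyclicallyReduced_altList hj ε) h).symm
  rw [← rotate_mod, length_altList] at hn
  have hlt : n % (4 * j) < 4 * j := Nat.mod_lt n (by omega)
  have heven := mod_two_eq_zero_of_altList_eq_rotate hlt hn.symm
  exact ⟨⟨n % (4 * j) / 2, by omega⟩, by rw [← hn]; congr 1; simp only; omega⟩

theorem card_isConj_altWord_le (hj : 0 < j) (ε : Fin (2 * j) → Bool) :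
    Nat.card {ε' : Fin (2 * j) → Bool // IsConj (altWord j ε') (altWord j ε)} ≤ 2 * j := by
  choose m hm using fun s : {ε' // IsConj (altWord j ε') (altWord j ε)} =>
    exists_altList_eq_rotate_of_isConj hj s.2
  calc _ ≤ Nat.card (Fin (2 * j)) :=
        Nat.card_le_card_of_injective m fun s t hst =>
          Subtype.ext (altList_injective j ((hm s).trans (hst ▸ hm t).symm))
    _ = 2 * j := Nat.card_fin _

end altList

theorem stmt_16 (j : ℕ) (hj : 2 ≤ j) :
    (∀ ε : Fin (2 * j) → Bool,
      Nat.card {ε' : Fin (2 * j) → Bool // IsConj (altWord j ε') (altWord j ε)} ≤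
        2 * j) ∧
    ((2 : ℝ) ^ (2 * j) / (2 * j) ≤
      (Set.range fun ε : Fin (2 * j) → Bool => ConjClasses.mk (altWord j ε)).ncard) := by
  have hconj := card_isConj_altWord_le (j := j) (by omega)
  refine ⟨hconj, ?_⟩
  have hcount := card_le_mul_ncard_range (fun ε => ConjClasses.mk (altWord j ε)) fun ε => by
    simpa only [ConjClasses.mk_eq_mk_iff_isConj] using hconj ε
  rw [Nat.card_fun, Nat.card_fin, Nat.card_eq_fintype_card, Fintype.card_bool] at hcount
  rw [div_le_iff₀ (by positivity), mul_comm _ (2 * (j : ℝ))]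
  exact_mod_cast hcount
end

section
/- For real $Y \geq \log 3$, let $N(Y)$ denote the number of nonempty reduced words $w$ in the free group on $a_1, a_2$ such that $\sum_k \log(3 d_k) \leq Y$, where the sum runs over the degrees $d_k$ of the syllables of $w$. Then $N(Y) \leq \frac{1}{2} e^{3Y}$, and $N(Y) = 0$ for $0 < Y < \log 3$. -/
/-- A list of terms `(generator index, exponent)` is a reduced word in the free
group on two generators: all exponents are nonzero and consecutive terms are
powers of different generators. -/
def IsReducedWord (w : List (Fin 2 × ℤ)) : Prop :=
  (∀ p ∈ w, p.2 ≠ 0) ∧ w.Chain' fun p q => p.1 ≠ q.1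

/-- The syllable decomposition of a word: terms with exponent of absolute value
at least `2` are syllables by themselves, and maximal runs of consecutive terms
whose exponents are all `+1`, or all `-1`, are syllables. -/
def syllables (w : List (Fin 2 × ℤ)) : List (List (Fin 2 × ℤ)) :=
  w.splitBy fun p q => (p.2 == 1 && q.2 == 1) || (p.2 == -1 && q.2 == -1)

/-- The degree of a syllable: the sum of the absolute values of the exponents of
its terms. -/
def syllableDegree (s : List (Fin 2 × ℤ)) : ℕ :=
  (s.map fun p => p.2.natAbs).sum

/-!
A syllable is determined by its first generator, the sign and absolute value `m` of its exponents
(all equal), and its number `n` of terms, where `m = 1` or `n = 1`; its degree is `m * n`. Hence a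
word with `∑ log (3 dₖ) ≤ Y` is determined by a sequence of such codes with `∏ 3 dₖ ≤ X = e^Y`.
By Rankin's trick the sequences of length `j` number at most `X ^ 3 * q ^ j`, where
`q = ∑ (3 d)⁻³` over all codes equals `4/27 * (1 + 2 ∑_{d ≥ 2} d⁻³) ≤ 8/27`; summing over `j ≥ 1`
gives at most `8/19 * X ^ 3 ≤ e^{3Y} / 2`. A nonempty word has a syllable, and each syllable
contributes at least `log 3`.
-/

open Finset

theorem card_filter_prod_le_piFinset {ι α : Type*} [Fintype ι] [DecidableEq ι] (A : Finset α)
    (c : α → ℕ) (hc : ∀ a ∈ A, 0 < c a) (M s : ℕ) :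
    (#{f ∈ Fintype.piFinset fun _ : ι => A | ∏ i, c (f i) ≤ M} : ℝ) ≤
      M ^ s * (∑ a ∈ A, ((c a : ℝ) ^ s)⁻¹) ^ Fintype.card ι := by
  have hpoint : ∀ f ∈ {f ∈ Fintype.piFinset fun _ : ι => A | ∏ i, c (f i) ≤ M},
      (1 : ℝ) ≤ M ^ s * ∏ i, ((c (f i) : ℝ) ^ s)⁻¹ := by
    intro f hf
    obtain ⟨hfA, hfM⟩ := mem_filter.1 hf
    have hpos : (0 : ℝ) < ∏ i, (c (f i) : ℝ) :=
      prod_pos fun i _ => Nat.cast_pos.2 (hc _ (Fintype.mem_piFinset.1 hfA i))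
    rw [prod_inv_distrib, prod_pow, le_mul_inv_iff₀ (pow_pos hpos s), one_mul]
    exact pow_le_pow_left₀ hpos.le (by exact_mod_cast hfM) s
  calc (#{f ∈ Fintype.piFinset fun _ : ι => A | ∏ i, c (f i) ≤ M} : ℝ)
      = ∑ f ∈ {f ∈ Fintype.piFinset fun _ : ι => A | ∏ i, c (f i) ≤ M}, 1 := by simp
    _ ≤ ∑ f ∈ {f ∈ Fintype.piFinset fun _ : ι => A | ∏ i, c (f i) ≤ M},
          (M : ℝ) ^ s * ∏ i, ((c (f i) : ℝ) ^ s)⁻¹ := sum_le_sum hpoint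
    _ ≤ ∑ f ∈ Fintype.piFinset fun _ : ι => A, (M : ℝ) ^ s * ∏ i, ((c (f i) : ℝ) ^ s)⁻¹ :=
      sum_le_sum_of_subset_of_nonneg (filter_subset _ _) fun _ _ _ => by positivity
    _ = M ^ s * (∑ a ∈ A, ((c a : ℝ) ^ s)⁻¹) ^ Fintype.card ι := by
      rw [← mul_sum, sum_prod_piFinset A fun _ a => ((c a : ℝ) ^ s)⁻¹, prod_const, card_univ]

theorem sum_Icc_two_inv_cube_le (D : ℕ) : ∑ n ∈ Icc 2 D, ((n : ℝ) ^ 3)⁻¹ ≤ 1 / 2 := by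
  have hIoo : Icc 2 D = Ioo 1 (D + 1) := by ext; simp only [mem_Icc, mem_Ioo]; omega
  calc ∑ n ∈ Icc 2 D, ((n : ℝ) ^ 3)⁻¹ ≤ ∑ n ∈ Ioo 1 (D + 1), ((n : ℝ) ^ 2)⁻¹ / 2 := by
        rw [hIoo]
        refine sum_le_sum fun n hn => ?_
        have hn : (2 : ℝ) ≤ n := by exact_mod_cast (mem_Ioo.1 hn).1
        calc ((n : ℝ) ^ 3)⁻¹ ≤ (2 * (n : ℝ) ^ 2)⁻¹ := inv_anti₀ (by positivity) (by nlinarith)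
          _ = ((n : ℝ) ^ 2)⁻¹ / 2 := by ring
    _ ≤ 1 / 2 := by
        rw [← sum_div]
        have := sum_Ioo_inv_sq_le (α := ℝ) 1 (D + 1)
        norm_num at this ⊢
        linarith

section Syllables

variable {w s : List (Fin 2 × ℤ)}

theorem flatten_syllables (w : List (Fin 2 × ℤ)) : (syllables w).flatten = w :=
  List.flatten_splitBy _ w

theorem syllables_ne_nil (hw : w ≠ []) : syllables w ≠ [] := fun h =>
  hw (by rw [← flatten_syllables w, h, List.flatten_nil])

theorem IsReducedWord.of_mem_syllables (hw : IsReducedWord w) (hs : s ∈ syllables w) :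
    IsReducedWord s := by
  have hinf : s <:+: w := flatten_syllables w ▸ List.infix_of_mem_flatten hs
  exact ⟨fun p hp => hw.1 p (hinf.subset hp), List.IsChain.infix hw.2 hinf⟩

theorem map_snd_eq_replicate_of_mem_syllables (hs : s ∈ syllables w) :
    s.map Prod.snd = List.replicate s.length s.headI.2 := by
  have hchain : (s.map Prod.snd).IsChain (· = ·) :=
    List.isChain_map_of_isChain _ (fun p q h => by
      simp only [Bool.or_eq_true, Bool.and_eq_true, beq_iff_eq] at h
      omega)
      (List.isChain_of_mem_splitBy hs)
  obtain _ | ⟨a, t⟩ := s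
  · rfl
  · simpa [List.replicate_succ] using List.isChain_cons_eq_iff_eq_replicate.1 hchain

theorem exponent_eq_headI_of_mem_syllables (hs : s ∈ syllables w) {p} (hp : p ∈ s) :
    p.2 = s.headI.2 :=
  List.eq_of_mem_replicate (map_snd_eq_replicate_of_mem_syllables hs ▸ List.mem_map_of_mem hp)

theorem natAbs_headI_eq_one_of_mem_syllables (hs : s ∈ syllables w) (hlen : 2 ≤ s.length) :
    s.headI.2.natAbs = 1 := by
  obtain _ | ⟨a, _ | ⟨b, t⟩⟩ := s
  · simp at hlen
  · simp at hlen
  · have hab := (List.isChain_cons_cons.1 (List.isChain_of_mem_splitBy hs)).1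
    simp only [Bool.or_eq_true, Bool.and_eq_true, beq_iff_eq] at hab
    rw [List.headI_cons]
    omega

theorem syllableDegree_of_mem_syllables (hs : s ∈ syllables w) :
    syllableDegree s = s.length * s.headI.2.natAbs := by
  have := congrArg (fun l => (l.map Int.natAbs).sum) (map_snd_eq_replicate_of_mem_syllables hs)
  simpa [syllableDegree, Function.comp_def, mul_comm] using this

end Syllables

def alternating : Fin 2 → ℤ → ℕ → List (Fin 2 × ℤ)
  | _, _, 0 => []
  | g, e, n + 1 => (g, e) :: alternating (g + 1) e n

theorem alternating_headI_length {e : ℤ} :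
    ∀ {s : List (Fin 2 × ℤ)}, s.IsChain (·.1 ≠ ·.1) → (∀ p ∈ s, p.2 = e) →
      alternating s.headI.1 e s.length = s
  | [], _, _ => rfl
  | [a], _, he => by simp [alternating, ← he a (by simp)]
  | a :: b :: t, hs, he => by
    obtain ⟨hab, hs⟩ := List.isChain_cons_cons.1 hs
    have hb : b.1 = a.1 + 1 := by omega
    have ih := alternating_headI_length hs fun p hp => he p (List.mem_cons_of_mem a hp)
    rw [List.headI_cons, hb] at ih
    rw [List.headI_cons, List.length_cons, alternating, ih, ← he a (by simp)]

abbrev SyllableCode := Fin 2 × Bool × ℕ × ℕ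

def syllableCode (s : List (Fin 2 × ℤ)) : SyllableCode :=
  (s.headI.1, decide (0 < s.headI.2), s.headI.2.natAbs, s.length)

def decodeSyllable : SyllableCode → List (Fin 2 × ℤ)
  | (g, pos, m, n) => alternating g (if pos then (m : ℤ) else -(m : ℤ)) n

def codeWeight (c : SyllableCode) : ℕ := 3 * (c.2.2.1 * c.2.2.2)

section Codes

variable {w s : List (Fin 2 × ℤ)}

theorem natAbs_headI_pos (hw : IsReducedWord w) (hs : s ∈ syllables w) :
    0 < s.headI.2.natAbs := by
  obtain ⟨a, t, rfl⟩ := List.exists_cons_of_ne_nil (List.ne_nil_of_mem_splitBy hs)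
  exact Int.natAbs_pos.2 ((hw.of_mem_syllables hs).1 a List.mem_cons_self)

theorem one_le_syllableDegree (hw : IsReducedWord w) (hs : s ∈ syllables w) :
    1 ≤ syllableDegree s := by
  rw [syllableDegree_of_mem_syllables hs]
  exact Nat.mul_pos (List.length_pos_of_ne_nil (List.ne_nil_of_mem_splitBy hs))
    (natAbs_headI_pos hw hs)

theorem decodeSyllable_syllableCode (hw : IsReducedWord w) (hs : s ∈ syllables w) :
    decodeSyllable (syllableCode s) = s := by
  have hsign : (if decide (0 < s.headI.2) then (s.headI.2.natAbs : ℤ)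
      else -(s.headI.2.natAbs : ℤ)) = s.headI.2 := by
    split_ifs with h <;> simp only [decide_eq_true_eq] at h <;> omega
  rw [syllableCode, decodeSyllable, hsign]
  exact alternating_headI_length (hw.of_mem_syllables hs).2
    fun p hp => exponent_eq_headI_of_mem_syllables hs hp

theorem syllableCodes_injOn :
    Set.InjOn (fun w => (syllables w).map syllableCode) {w | IsReducedWord w} := by
  have hdecode : ∀ w, IsReducedWord w →
      ((syllables w).map syllableCode).map decodeSyllable = syllables w := fun w hw => by
    rw [List.map_map]
    exact (List.map_congr_left fun s hs => decodeSyllable_syllableCode hw hs).trans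
      (List.map_id' _)
  intro w hw w' hw' h
  rw [← flatten_syllables w, ← flatten_syllables w', ← hdecode w hw, ← hdecode w' hw']
  exact congrArg (fun l => (l.map decodeSyllable).flatten) h

theorem codeWeight_syllableCode (hs : s ∈ syllables w) :
    codeWeight (syllableCode s) = 3 * syllableDegree s := by
  rw [codeWeight, syllableCode, syllableDegree_of_mem_syllables hs, mul_comm s.length]

end Codes

def wordWeight (w : List (Fin 2 × ℤ)) : ℕ :=
  ((syllables w).map fun s => 3 * syllableDegree s).prod

section WordWeight

variable {w s : List (Fin 2 × ℤ)}

theorem prod_codeWeight_syllableCodes (w : List (Fin 2 × ℤ)) :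
    (((syllables w).map syllableCode).map codeWeight).prod = wordWeight w := by
  rw [List.map_map, wordWeight]
  exact congrArg List.prod (List.map_congr_left fun s hs => codeWeight_syllableCode hs)

theorem three_pow_length_le_wordWeight (hw : IsReducedWord w) :
    3 ^ (syllables w).length ≤ wordWeight w := by
  rw [wordWeight, ← List.length_map (fun s => 3 * syllableDegree s)]
  refine List.pow_card_le_prod _ _ fun x hx => ?_
  obtain ⟨s, hs, rfl⟩ := List.mem_map.1 hx
  have := one_le_syllableDegree hw hs
  omega

theorem three_le_wordWeight (hw : IsReducedWord w) (hne : w ≠ []) : 3 ≤ wordWeight w :=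
  calc 3 = 3 ^ 1 := rfl
    _ ≤ 3 ^ (syllables w).length :=
      Nat.pow_le_pow_right (by norm_num) (List.length_pos_of_ne_nil (syllables_ne_nil hne))
    _ ≤ wordWeight w := three_pow_length_le_wordWeight hw

theorem three_mul_syllableDegree_le_wordWeight (hw : IsReducedWord w) (hs : s ∈ syllables w) :
    3 * syllableDegree s ≤ wordWeight w :=
  Nat.le_of_dvd (lt_of_lt_of_le (by positivity) (three_pow_length_le_wordWeight hw))
    (List.dvd_prod (List.mem_map_of_mem hs))

theorem exp_sum_log_syllables (hw : IsReducedWord w) :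
    Real.exp ((syllables w).map fun s => Real.log (3 * (syllableDegree s : ℝ))).sum =
      wordWeight w := by
  rw [Real.exp_list_sum, List.map_map, wordWeight, Nat.cast_list_prod, List.map_map]
  refine congrArg List.prod (List.map_congr_left fun s hs => ?_)
  have := one_le_syllableDegree hw hs
  simp only [Function.comp_apply, Nat.cast_mul, Nat.cast_ofNat]
  exact Real.exp_log (by positivity)

end WordWeight

/-- Codes `(g, sign, m, n)` of syllables of degree at most `D`: runs of `n ≤ D` terms with
exponents `±1`, and single terms with exponent `±m`, `2 ≤ m ≤ D`. -/
def codeAlphabet (D : ℕ) : Finset SyllableCode :=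
  univ ×ˢ univ ×ˢ (({1} ×ˢ Icc 1 D) ∪ (Icc 2 D ×ˢ {1}))

theorem codeWeight_pos {D : ℕ} {a : SyllableCode} (ha : a ∈ codeAlphabet D) :
    0 < codeWeight a := by
  simp only [codeAlphabet, mem_product, mem_univ, true_and, mem_union, mem_singleton,
    mem_Icc] at ha
  refine Nat.mul_pos three_pos (Nat.mul_pos ?_ ?_) <;> omega

theorem syllableCode_mem_codeAlphabet {w s : List (Fin 2 × ℤ)} {D : ℕ} (hw : IsReducedWord w)
    (hs : s ∈ syllables w) (hD : syllableDegree s ≤ D) : syllableCode s ∈ codeAlphabet D := by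
  have hm := natAbs_headI_pos hw hs
  have hn := List.length_pos_of_ne_nil (List.ne_nil_of_mem_splitBy hs)
  rw [syllableDegree_of_mem_syllables hs] at hD
  simp only [codeAlphabet, syllableCode, mem_product, mem_univ, true_and, mem_union,
    mem_singleton, mem_Icc]
  rcases Nat.lt_or_ge s.length 2 with hlen | hlen
  · obtain h1 : s.length = 1 := by omega
    rw [h1, one_mul] at hD
    omega
  · have := natAbs_headI_eq_one_of_mem_syllables hs hlen
    rw [this, mul_one] at hD
    omega

theorem sum_codeAlphabet_le (D : ℕ) :
    ∑ a ∈ codeAlphabet D, ((codeWeight a : ℝ) ^ 3)⁻¹ ≤ 8 / 27 := by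
  have hdisj : Disjoint ({1} ×ˢ Icc 1 D) (Icc 2 D ×ˢ {1}) := by
    simp only [disjoint_left, mem_product, mem_singleton, mem_Icc]
    omega
  have hsplit : ∑ n ∈ Icc 1 D, ((n : ℝ) ^ 3)⁻¹ ≤ 1 + ∑ n ∈ Icc 2 D, ((n : ℝ) ^ 3)⁻¹ :=
    calc ∑ n ∈ Icc 1 D, ((n : ℝ) ^ 3)⁻¹ ≤ ∑ n ∈ insert 1 (Icc 2 D), ((n : ℝ) ^ 3)⁻¹ :=
          sum_le_sum_of_subset_of_nonneg (fun n => by simp only [mem_Icc, mem_insert]; omega)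
            fun _ _ _ => by positivity
      _ = 1 + ∑ n ∈ Icc 2 D, ((n : ℝ) ^ 3)⁻¹ := by simp [sum_insert]
  have htail := sum_Icc_two_inv_cube_le D
  simp only [codeAlphabet, codeWeight, sum_product, sum_union hdisj, sum_singleton, Nat.cast_mul,
    Nat.cast_ofNat, Nat.cast_one, one_pow, inv_one, one_mul, mul_one, mul_pow, mul_inv, ← mul_sum,
    sum_const, card_univ, Fintype.card_fin, Fintype.card_bool, nsmul_eq_mul]
  linarith

def codeLists (M : ℕ) : Finset (List SyllableCode) :=
  (Icc 1 M).biUnion fun j =>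
    {f ∈ Fintype.piFinset fun _ : Fin j => codeAlphabet M | ∏ i, codeWeight (f i) ≤ M}.image
      List.ofFn

theorem card_codeLists_le (M : ℕ) : (#(codeLists M) : ℝ) ≤ 8 / 19 * M ^ 3 := by
  have hgeom : ∑ j ∈ Icc 1 M, ((8 : ℝ) / 27) ^ j ≤ 8 / 19 := by
    rw [← Ico_add_one_right_eq_Icc]
    refine (geom_sum_Ico_le_of_lt_one (by norm_num) (by norm_num)).trans ?_
    norm_num
  calc (#(codeLists M) : ℝ)
      ≤ ∑ j ∈ Icc 1 M,
          (#{f ∈ Fintype.piFinset fun _ : Fin j => codeAlphabet M |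
            ∏ i, codeWeight (f i) ≤ M} : ℝ) := by
        exact_mod_cast card_biUnion_le.trans (sum_le_sum fun j _ => card_image_le)
    _ ≤ ∑ j ∈ Icc 1 M, (M : ℝ) ^ 3 * (8 / 27) ^ j := by
        refine sum_le_sum fun j _ => ?_
        refine (card_filter_prod_le_piFinset _ _ (fun a ha => codeWeight_pos ha) M 3).trans ?_
        rw [Fintype.card_fin]
        gcongr
        exact sum_codeAlphabet_le M
    _ ≤ 8 / 19 * M ^ 3 := by
        rw [← mul_sum, mul_comm]
        gcongr

theorem syllableCodes_mem_codeLists {w : List (Fin 2 × ℤ)} {M : ℕ} (hw : IsReducedWord w)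
    (hne : w ≠ []) (hM : wordWeight w ≤ M) : (syllables w).map syllableCode ∈ codeLists M := by
  set l := (syllables w).map syllableCode
  have hlen : l.length ≤ M := calc
    l.length ≤ 3 ^ l.length := (Nat.lt_pow_self (by norm_num)).le
    _ ≤ M := by rw [List.length_map]; exact (three_pow_length_le_wordWeight hw).trans hM
  have hmem : ∀ a ∈ l, a ∈ codeAlphabet M := fun a ha => by
    obtain ⟨s, hs, rfl⟩ := List.mem_map.1 ha
    have := three_mul_syllableDegree_le_wordWeight hw hs
    exact syllableCode_mem_codeAlphabet hw hs (by omega)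
  refine mem_biUnion.2 ⟨l.length, mem_Icc.2 ⟨?_, hlen⟩,
    mem_image.2 ⟨fun i => l[i.1], ?_, List.ofFn_getElem⟩⟩
  · exact List.length_pos_of_ne_nil (by simpa [l] using syllables_ne_nil hne)
  · refine mem_filter.2 ⟨Fintype.mem_piFinset.2 fun i => hmem _ (List.getElem_mem _), ?_⟩
    show ∏ i : Fin l.length, codeWeight l[i.1] ≤ M
    rw [Fin.prod_univ_fun_getElem, prod_codeWeight_syllableCodes]
    exact hM

theorem card_words_le_card_codeLists (Y : ℝ) :
    Nat.card {w : List (Fin 2 × ℤ) // IsReducedWord w ∧ w ≠ [] ∧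
      ((syllables w).map fun s => Real.log (3 * (syllableDegree s : ℝ))).sum ≤ Y} ≤
      #(codeLists ⌊Real.exp Y⌋₊) := by
  have hweight : ∀ w, IsReducedWord w →
      ((syllables w).map fun s => Real.log (3 * (syllableDegree s : ℝ))).sum ≤ Y →
        wordWeight w ≤ ⌊Real.exp Y⌋₊ := fun w hw hY => by
    rw [Nat.le_floor_iff (Real.exp_pos Y).le, ← exp_sum_log_syllables hw]
    exact Real.exp_le_exp.2 hY
  rw [← Nat.card_eq_finsetCard]
  refine Nat.card_le_card_of_injective
    (fun w => ⟨_, syllableCodes_mem_codeLists w.2.1 w.2.2.1 (hweight w w.2.1 w.2.2.2)⟩)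
    fun w w' h => Subtype.ext (syllableCodes_injOn w.2.1 w'.2.1 (congrArg Subtype.val h))

theorem stmt_18_general (Y : ℝ) :
    (Real.log 3 ≤ Y →
      (Nat.card {w : List (Fin 2 × ℤ) // IsReducedWord w ∧ w ≠ [] ∧
          ((syllables w).map fun s => Real.log (3 * (syllableDegree s : ℝ))).sum ≤ Y} : ℝ)
        ≤ (1 / 2) * Real.exp (3 * Y)) ∧
    (Y < Real.log 3 →
      Nat.card {w : List (Fin 2 × ℤ) // IsReducedWord w ∧ w ≠ [] ∧
          ((syllables w).map fun s => Real.log (3 * (syllableDegree s : ℝ))).sum ≤ Y} = 0) := by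
  refine ⟨fun _ => ?_, fun hY => ?_⟩
  · calc _ ≤ (#(codeLists ⌊Real.exp Y⌋₊) : ℝ) := by
          exact_mod_cast card_words_le_card_codeLists Y
      _ ≤ 8 / 19 * (⌊Real.exp Y⌋₊ : ℝ) ^ 3 := card_codeLists_le _
      _ ≤ 8 / 19 * Real.exp Y ^ 3 := by gcongr; exact Nat.floor_le (Real.exp_pos Y).le
      _ ≤ 1 / 2 * Real.exp (3 * Y) := by
          rw [← Real.exp_nat_mul]
          have := Real.exp_pos (3 * Y)
          push_cast
          linarith
  · refine Nat.card_eq_zero.2 (Or.inl ⟨fun ⟨w, hw, hne, hsum⟩ => hY.not_ge ?_⟩)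
    rw [Real.log_le_iff_le_exp three_pos]
    calc (3 : ℝ) ≤ wordWeight w := by exact_mod_cast three_le_wordWeight hw hne
      _ = _ := (exp_sum_log_syllables hw).symm
      _ ≤ Real.exp Y := Real.exp_le_exp.2 hsum

theorem stmt_18 (Y : ℝ) (hY : 0 < Y) :
    (Real.log 3 ≤ Y →
      (Nat.card {w : List (Fin 2 × ℤ) // IsReducedWord w ∧ w ≠ [] ∧
          ((syllables w).map fun s => Real.log (3 * (syllableDegree s : ℝ))).sum ≤ Y} : ℝ)
        ≤ (1 / 2) * Real.exp (3 * Y)) ∧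
    (Y < Real.log 3 →
      Nat.card {w : List (Fin 2 × ℤ) // IsReducedWord w ∧ w ≠ [] ∧
          ((syllables w).map fun s => Real.log (3 * (syllableDegree s : ℝ))).sum ≤ Y} = 0) :=
  stmt_18_general Y
end
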